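/- arXiv:math/9504222 — 4 statements merged into one kernel-verified Lean document; each statement's English description precedes it below -/
import Mathlib

section
/- (MacWilliams Identity) Let C ⊆ F_2^n be a binary code with weight enumerator W_C(X) = ∑_{v∈C} X^{|v|}. Then #C · W_{C^⊥}(X) = ∑_{v∈C} (1-X)^{|v|} (1+X)^{n-|v|} in ℤ[X]. -/
/-!
Writing `ψ b = (-1) ^ b` for the sign character of `ZMod 2`, the product over the coordinates
of `∑_{b ∈ F_2} ψ (b v_i) X ^ b`, which is `1 + X` or `1 - X` according as `v_i = 0` or not,
expands to `(1 - X) ^ |v| (1 + X) ^ (n - |v|) = ∑_w ψ ⟨w, v⟩ X ^ |w|`. Summing over `v ∈ C` and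
exchanging the sums, the inner sum `∑_{v ∈ C} ψ ⟨w, v⟩` is the sum of the character
`v ↦ ψ ⟨w, v⟩` of `C`, which is `#C` if this character is trivial, i.e. `w ∈ C^⊥`, and `0`
otherwise.
-/

open Finset

/-- The dual code of a binary code `C ⊆ F_2^n`. -/
def dualCode (n : ℕ) (C : Submodule (ZMod 2) (Fin n → ZMod 2)) :
    Submodule (ZMod 2) (Fin n → ZMod 2) where
  carrier := {v | ∀ w ∈ C, ∑ i, v i * w i = 0}
  add_mem' := by
    intro a b ha hb w hw
    simp only [Pi.add_apply, add_mul]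
    rw [Finset.sum_add_distrib, ha w hw, hb w hw, add_zero]
  zero_mem' := by intro w hw; simp
  smul_mem' := by
    intro c a ha w hw
    simp only [Pi.smul_apply, smul_eq_mul, mul_assoc, ← Finset.mul_sum, ha w hw, mul_zero]

lemma ZMod.eq_zero_or_eq_one (a : ZMod 2) : a = 0 ∨ a = 1 := by
  revert a; decide

lemma AddChar.map_sum_eq_prod {ι A M : Type*} [AddCommMonoid A] [CommMonoid M]
    (ψ : AddChar A M) (s : Finset ι) (f : ι → A) : ψ (∑ i ∈ s, f i) = ∏ i ∈ s, ψ (f i) := by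
  induction s using Finset.cons_induction with
  | empty => simp
  | cons a s ha ih => rw [sum_cons, prod_cons, AddChar.map_add_eq_mul, ih]

lemma hammingNorm_eq_sum_val {ι : Type*} [Fintype ι] (w : ι → ZMod 2) :
    hammingNorm w = ∑ i, (w i).val := by
  rw [hammingNorm, card_filter]
  refine sum_congr rfl fun i _ => ?_
  rcases ZMod.eq_zero_or_eq_one (w i) with h | h <;> rw [h] <;> rfl

lemma prod_ite_eq_zero_eq_pow_mul_pow {ι β M : Type*} [Fintype ι] [Zero β] [DecidableEq β]
    [CommMonoid M] (v : ι → β) (a b : M) :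
    ∏ i, (if v i = 0 then a else b) = a ^ (Fintype.card ι - hammingNorm v) * b ^ hammingNorm v := by
  rw [prod_ite, prod_const, prod_const, ← hammingNorm, ← card_univ,
    ← card_filter_add_card_filter_not (s := univ) (fun i => v i = 0), ← hammingNorm,
    Nat.add_sub_cancel]

section SignCharacter

variable (R : Type*) [CommRing R]

def signChar : AddChar (ZMod 2) R := AddChar.zmodChar 2 (neg_one_sq (R := R))

variable {R}

lemma signChar_one : signChar R 1 = -1 := pow_one _

lemma signChar_injective [NeZero (2 : R)] : Function.Injective (signChar R) := by
  have hneg : (-1 : R) ≠ 1 := fun h => two_ne_zero (α := R) (by linear_combination -h)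
  intro a b hab
  rcases ZMod.eq_zero_or_eq_one a with rfl | rfl <;>
    rcases ZMod.eq_zero_or_eq_one b with rfl | rfl <;>
    simp_all [signChar_one, hneg.symm]

lemma sum_signChar_mul_mul_pow (a : ZMod 2) (x : R) :
    ∑ b : ZMod 2, signChar R (b * a) * x ^ b.val = if a = 0 then 1 + x else 1 - x := by
  have hval : (1 : ZMod 2).val = 1 := rfl
  rw [show (univ : Finset (ZMod 2)) = {0, 1} from rfl, sum_pair zero_ne_one]
  rcases ZMod.eq_zero_or_eq_one a with rfl | rfl
  · simp [hval]
  · simp [hval, signChar_one, sub_eq_add_neg]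

lemma sum_signChar_dotProduct_mul_pow {ι : Type*} [Fintype ι] [DecidableEq ι]
    (v : ι → ZMod 2) (x : R) :
    ∑ w : ι → ZMod 2, signChar R (w ⬝ᵥ v) * x ^ hammingNorm w
      = (1 - x) ^ hammingNorm v * (1 + x) ^ (Fintype.card ι - hammingNorm v) := by
  have hterm : ∀ w : ι → ZMod 2, signChar R (w ⬝ᵥ v) * x ^ hammingNorm w
      = ∏ i, signChar R (w i * v i) * x ^ (w i).val := fun w => by
    rw [prod_mul_distrib, prod_pow_eq_pow_sum, ← hammingNorm_eq_sum_val, dotProduct,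
      AddChar.map_sum_eq_prod]
  rw [Fintype.sum_congr _ _ hterm,
    ← Fintype.prod_sum fun i (b : ZMod 2) => signChar R (b * v i) * x ^ b.val]
  simp_rw [sum_signChar_mul_mul_pow, prod_ite_eq_zero_eq_pow_mul_pow, mul_comm]

variable [IsDomain R] [NeZero (2 : R)]

lemma sum_signChar_dotProduct_eq_ite {n : ℕ} (C : Submodule (ZMod 2) (Fin n → ZMod 2))
    [Fintype C] (w : Fin n → ZMod 2) [Decidable (w ∈ dualCode n C)] :
    ∑ v : C, signChar R (w ⬝ᵥ v) = if w ∈ dualCode n C then (Nat.card C : R) else 0 := by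
  let f : C →+ ZMod 2 := AddMonoidHom.mk' (fun v => w ⬝ᵥ v) fun a b => dotProduct_add _ _ _
  have hf : (signChar R).compAddMonoidHom f = 0 ↔ w ∈ dualCode n C := by
    have h0 : (signChar R).compAddMonoidHom (0 : C →+ ZMod 2) = 0 := by ext; simp
    rw [← h0, ((signChar R).compAddMonoidHom_injective_right signChar_injective).eq_iff,
      DFunLike.ext_iff]
    exact ⟨fun h c hc => h ⟨c, hc⟩, fun h c => h c c.2⟩
  rw [Nat.card_eq_fintype_card, ← if_congr hf rfl rfl]
  exact AddChar.sum_eq_ite ((signChar R).compAddMonoidHom f)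

theorem card_mul_sum_dualCode_pow {n : ℕ} (C : Submodule (ZMod 2) (Fin n → ZMod 2))
    [Fintype C] [Fintype (dualCode n C)] (x : R) :
    (Nat.card C : R) * ∑ w : dualCode n C, x ^ hammingNorm (w : Fin n → ZMod 2)
      = ∑ v : C, (1 - x) ^ hammingNorm (v : Fin n → ZMod 2)
          * (1 + x) ^ (n - hammingNorm (v : Fin n → ZMod 2)) := by
  classical
  calc (Nat.card C : R) * ∑ w : dualCode n C, x ^ hammingNorm (w : Fin n → ZMod 2)
      = ∑ w, (if w ∈ dualCode n C then (Nat.card C : R) else 0) * x ^ hammingNorm w := by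
        simp_rw [ite_mul, zero_mul, ← sum_filter, mul_sum]
        rw [sum_subtype _ (p := (· ∈ dualCode n C)) (by simp)]
    _ = ∑ w, ∑ v : C, signChar R (w ⬝ᵥ (v : Fin n → ZMod 2)) * x ^ hammingNorm w := by
        simp_rw [← sum_mul, sum_signChar_dotProduct_eq_ite]
    _ = ∑ v : C, ∑ w, signChar R (w ⬝ᵥ (v : Fin n → ZMod 2)) * x ^ hammingNorm w := by
        rw [sum_comm]
    _ = _ := by simp_rw [sum_signChar_dotProduct_mul_pow, Fintype.card_fin]

end SignCharacter

open Polynomial in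
/-- MacWilliams Identity:
`#C · W_{C^⊥}(X) = ∑_{v∈C} (1-X)^{|v|} (1+X)^{n-|v|}` in `ℤ[X]`. -/
theorem stmt_3 (n : ℕ) (C : Submodule (ZMod 2) (Fin n → ZMod 2)) :
    (Nat.card C : Polynomial ℤ) *
        ∑ᶠ w ∈ ((dualCode n C : Submodule (ZMod 2) (Fin n → ZMod 2)) :
          Set (Fin n → ZMod 2)), (X : Polynomial ℤ) ^ (hammingNorm w)
      = ∑ᶠ v ∈ (C : Set (Fin n → ZMod 2)),
          (1 - X : Polynomial ℤ) ^ (hammingNorm v) * (1 + X) ^ (n - hammingNorm v) := by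
  classical
  simp_rw [← finsum_set_coe_eq_finsum_mem, finsum_eq_sum_of_fintype]
  exact card_mul_sum_dualCode_pow C X
end

section
/- Let q = 2^m, m ≥ 2, α a generator of F_q^*, and H_m the Hamming code. The Hamming balls of radius 1 centered at codewords of H_m are pairwise disjoint and cover F_2^{q-1}; i.e., every vector of F_2^{q-1} is within Hamming distance 1 of exactly one codeword (H_m is a perfect 1-error-correcting code). -/
open Polynomial

/-- the Hamming code `H_m` is a perfect 1-error-correcting code: every
vector of `F_2^{q-1}` (i.e. every polynomial of degree `< q−1` over `F_2`) is within
Hamming distance 1 of exactly one codeword. -/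
theorem stmt_9 (m : ℕ) (hm : 2 ≤ m) (F : Type*) [Field F] [Fintype F]
    [Algebra (ZMod 2) F] (hq : Fintype.card F = 2 ^ m)
    (α : F) (hα : orderOf α = 2 ^ m - 1)
    (p : Polynomial (ZMod 2)) (hdeg : p.degree < ((2 ^ m - 1 : ℕ) : WithBot ℕ)) :
    ∃! c : Polynomial (ZMod 2),
      c.degree < ((2 ^ m - 1 : ℕ) : WithBot ℕ) ∧
      (Ideal.Quotient.mk
          (Ideal.span {(X : Polynomial (ZMod 2)) ^ (2 ^ m - 1) - 1}) c ∈
        Ideal.span {Ideal.Quotient.mk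
          (Ideal.span {(X : Polynomial (ZMod 2)) ^ (2 ^ m - 1) - 1})
          (minpoly (ZMod 2) α)}) ∧
      (p - c).support.card ≤ 1 := by
  classical
  set n : ℕ := 2 ^ m - 1 with hn
  have hn3 : 3 ≤ n := by
    have h4 := Nat.sub_le_sub_right (Nat.pow_le_pow_right (by norm_num : 1 ≤ 2) hm) 1
    simpa [hn] using h4
  clear_value n
  have hn0 : 0 < n := by omega
  have hαn : α ^ n = 1 := by rw [← hα]; exact pow_orderOf_eq_one α
  have hα0 : α ≠ 0 := by
    intro h
    rw [h, zero_pow hn0.ne'] at hαn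
    exact zero_ne_one hαn
  haveI : CharP F 2 := charP_of_injective_algebraMap (algebraMap (ZMod 2) F).injective 2
  have hint : IsIntegral (ZMod 2) α := Algebra.IsIntegral.isIntegral α
  set f : Polynomial (ZMod 2) := minpoly (ZMod 2) α with hf
  set I : Ideal (Polynomial (ZMod 2)) :=
    Ideal.span {(X : Polynomial (ZMod 2)) ^ n - 1} with hI
  have hfdvd : f ∣ (X : Polynomial (ZMod 2)) ^ n - 1 := by
    rw [hf, minpoly.dvd_iff]
    rw [map_sub, map_pow, aeval_X, map_one, hαn, sub_self]
  -- membership in the code ideal is equivalent to vanishing at α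
  have hmem : ∀ c : Polynomial (ZMod 2),
      (Ideal.Quotient.mk I c ∈ Ideal.span {Ideal.Quotient.mk I f}) ↔ aeval α c = 0 := by
    intro c
    rw [Ideal.mem_span_singleton, ← minpoly.dvd_iff, ← hf]
    constructor
    · rintro ⟨z, hz⟩
      obtain ⟨r, rfl⟩ := Ideal.Quotient.mk_surjective z
      rw [← map_mul, Ideal.Quotient.eq] at hz
      have h1 : (X : Polynomial (ZMod 2)) ^ n - 1 ∣ c - f * r :=
        Ideal.mem_span_singleton.mp hz
      have h2 : f ∣ c - f * r := hfdvd.trans h1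
      have h3 : f ∣ f * r := Dvd.intro r rfl
      have := dvd_add h2 h3
      rwa [sub_add_cancel] at this
    · intro h
      exact map_dvd (Ideal.Quotient.mk I) h
  -- injectivity of powers of α below the order
  have hstep : ∀ i j : ℕ, i < j → j < n → α ^ i ≠ α ^ j := by
    intro i j hij hj he
    have h1 : α ^ i * α ^ (j - i) = α ^ i * 1 := by
      rw [mul_one, ← pow_add, Nat.add_sub_cancel' hij.le]
      exact he.symm
    have h2 : α ^ (j - i) = 1 := mul_left_cancel₀ (pow_ne_zero _ hα0) h1
    have h3 := orderOf_dvd_of_pow_eq_one h2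
    rw [hα] at h3
    have h4 : n ≤ j - i := Nat.le_of_dvd (by omega) h3
    omega
  have hinj : ∀ i j : ℕ, i < n → j < n → α ^ i = α ^ j → i = j := by
    intro i j hi hj he
    rcases Nat.lt_trichotomy i j with h | h | h
    · exact absurd he (hstep i j h hj)
    · exact h
    · exact absurd he.symm (hstep j i h hi)
  -- a nonzero polynomial vanishing at α with degree < n has at least 3 nonzero coeffs
  have key : ∀ d : Polynomial (ZMod 2), d.degree < (n : WithBot ℕ) →
      aeval α d = 0 → d.support.card ≤ 2 → d = 0 := by
    intro d hd hroot hcard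
    by_contra hne
    have hlt : ∀ i ∈ d.support, i < n := by
      intro i hi
      have := le_degree_of_ne_zero (Polynomial.mem_support_iff.mp hi)
      have := lt_of_le_of_lt this hd
      exact_mod_cast this
    have hsum : ∑ i ∈ d.support, α ^ i = 0 := by
      have hd' : aeval α d = ∑ i ∈ d.support, algebraMap (ZMod 2) F (d.coeff i) * α ^ i := by
        conv_lhs => rw [d.as_sum_support]
        rw [map_sum]
        refine Finset.sum_congr rfl fun i _ => ?_
        rw [← C_mul_X_pow_eq_monomial, map_mul, map_pow, aeval_X, aeval_C]
      rw [hd'] at hroot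
      rw [← hroot]
      refine (Finset.sum_congr rfl fun i hi => ?_).symm
      have hc : d.coeff i ≠ 0 := Polynomial.mem_support_iff.mp hi
      have hc1 : d.coeff i = 1 := by
        have hall : ∀ a : ZMod 2, a ≠ 0 → a = 1 := by decide
        exact hall _ hc
      rw [hc1, map_one, one_mul]
    have hc3 : d.support.card = 0 ∨ d.support.card = 1 ∨ d.support.card = 2 := by omega
    rcases hc3 with h | h | h
    · exact hne (Polynomial.support_eq_empty.mp (Finset.card_eq_zero.mp h))
    · obtain ⟨i, hi⟩ := Finset.card_eq_one.mp h
      rw [hi, Finset.sum_singleton] at hsum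
      exact pow_ne_zero _ hα0 hsum
    · obtain ⟨i, j, hij, hij2⟩ := Finset.card_eq_two.mp h
      rw [hij2, Finset.sum_insert (by simp [hij]), Finset.sum_singleton] at hsum
      have hi' : i < n := hlt i (by rw [hij2]; simp)
      have hj' : j < n := hlt j (by rw [hij2]; simp)
      have : α ^ i = α ^ j := by
        rw [add_eq_zero_iff_eq_neg] at hsum
        rw [hsum, CharTwo.neg_eq]
      exact hij (hinj i j hi' hj' this)
  -- support of a difference
  have hsub : ∀ g h : Polynomial (ZMod 2), (g - h).support ⊆ g.support ∪ h.support := by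
    intro g h
    rw [sub_eq_add_neg]
    refine (Polynomial.support_add).trans ?_
    rw [Polynomial.support_neg]
  -- existence of a codeword at distance ≤ 1
  obtain ⟨c₀, hc₀deg, hc₀root, hc₀dist⟩ :
      ∃ c : Polynomial (ZMod 2), c.degree < (n : WithBot ℕ) ∧ aeval α c = 0 ∧
        (p - c).support.card ≤ 1 := by
    by_cases hβ : aeval α p = 0
    · exact ⟨p, hdeg, hβ, by simp⟩
    · -- aeval α p is a nonzero element, hence a power of α
      obtain ⟨u, hu⟩ : IsUnit α := IsUnit.of_pow_eq_one hαn hn0.ne'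
      have hou : orderOf u = n := by rw [← orderOf_units, hu, hα]
      obtain ⟨v, hv⟩ : IsUnit (aeval α p) := Ne.isUnit hβ
      have htop : Subgroup.zpowers u = ⊤ := by
        apply Subgroup.eq_top_of_card_eq
        rw [Nat.card_zpowers, hou, Nat.card_eq_fintype_card, Fintype.card_units, hq]
        exact hn
      have hv' : v ∈ Submonoid.powers u := by
        rw [mem_powers_iff_mem_zpowers, htop]
        trivial
      obtain ⟨k, hk⟩ := hv'
      have hik : α ^ (k % n) = aeval α p := by
        have : u ^ (k % n) = v := by rw [← hou, pow_mod_orderOf]; exact hk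
        have := congrArg (Units.val) this
        rwa [Units.val_pow_eq_pow_val, hu, hv] at this
      set i := k % n with hi
      have hin : i < n := Nat.mod_lt _ hn0
      refine ⟨p - X ^ i, ?_, ?_, ?_⟩
      · refine lt_of_le_of_lt (degree_sub_le _ _) (max_lt hdeg ?_)
        rw [degree_X_pow]
        exact_mod_cast hin
      · rw [map_sub, map_pow, aeval_X, hik, sub_self]
      · rw [sub_sub_cancel, support_X_pow]
        simp
  refine ⟨c₀, ⟨hc₀deg, (hmem c₀).mpr hc₀root, hc₀dist⟩, ?_⟩
  rintro y ⟨hydeg, hymem, hydist⟩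
  have hyroot : aeval α y = 0 := (hmem y).mp hymem
  have hd : y - c₀ = 0 := by
    apply key
    · exact lt_of_le_of_lt (degree_sub_le _ _) (max_lt hydeg hc₀deg)
    · rw [map_sub, hyroot, hc₀root, sub_self]
    · have heq : y - c₀ = (p - c₀) - (p - y) := by ring
      calc (y - c₀).support.card
          ≤ ((p - c₀).support ∪ (p - y).support).card := by
            rw [heq]; exact Finset.card_le_card (hsub _ _)
        _ ≤ (p - c₀).support.card + (p - y).support.card := Finset.card_union_le _ _
        _ ≤ 2 := by omega
  exact sub_eq_zero.mp hd
end

section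
/- For q = 2^m, m ≥ 2, the number A_i of codewords of Hamming weight i in the Hamming code H_m satisfies q·A_i = C(q−1, i) + (q−1)·(−1)^⌊(i+1)/2⌋·C(q/2−1, ⌊i/2⌋); in particular A_1 = A_2 = 0 and A_3 = (q−1)(q−2)/6. -/
open Finset Polynomial

/-- The polynomial `∑ v_i T^i` of degree `< n` with coefficient vector `v`. -/
noncomputable def toPoly {n : ℕ} (v : Fin n → ZMod 2) : Polynomial (ZMod 2) :=
  ∑ i, Polynomial.C (v i) * X ^ (i : ℕ)

/-- The Hamming code `H_m`: coefficient vectors of polynomials of degree `< q−1` lying in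
the ideal of `F_2[T]/(T^{q-1}−1)` generated by the minimal polynomial of `α`. -/
def hammingCode (m : ℕ) (F : Type*) [Field F] [Fintype F] [Algebra (ZMod 2) F] (α : F) :
    Submodule (ZMod 2) (Fin (2 ^ m - 1) → ZMod 2) where
  carrier := {v | Ideal.Quotient.mk
      (Ideal.span {(X : Polynomial (ZMod 2)) ^ (2 ^ m - 1) - 1}) (toPoly v) ∈
    Ideal.span {Ideal.Quotient.mk
      (Ideal.span {(X : Polynomial (ZMod 2)) ^ (2 ^ m - 1) - 1}) (minpoly (ZMod 2) α)}}
  add_mem' := by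
    intro a b ha hb
    simp only [Set.mem_setOf_eq] at *
    have h : toPoly (a + b) = toPoly a + toPoly b := by
      simp [toPoly, Finset.sum_add_distrib, add_mul]
    rw [h, map_add]
    exact Ideal.add_mem _ ha hb
  zero_mem' := by
    simp only [Set.mem_setOf_eq]
    have h : toPoly (0 : Fin (2 ^ m - 1) → ZMod 2) = 0 := by simp [toPoly]
    rw [h, map_zero]
    exact Ideal.zero_mem _
  smul_mem' := by
    intro c a ha
    simp only [Set.mem_setOf_eq] at *
    have hc : c = 0 ∨ c = 1 := by revert c; decide
    rcases hc with hc | hc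
    · subst hc
      have h : (0 : ZMod 2) • a = 0 := by simp
      rw [h]
      have h0 : toPoly (0 : Fin (2 ^ m - 1) → ZMod 2) = 0 := by simp [toPoly]
      rw [h0, map_zero]
      exact Ideal.zero_mem _
    · subst hc
      have h : (1 : ZMod 2) • a = a := by simp
      rw [h]
      exact ha


lemma coeff_one_sub_sq (N i : ℕ) :
    ((1 - X ^ 2 : ℤ[X]) ^ N).coeff i
      = if 2 ∣ i then (-1 : ℤ) ^ (i / 2) * N.choose (i / 2) else 0 := by
  have h : (1 - X ^ 2 : ℤ[X]) ^ N
      = ∑ t ∈ range (N + 1),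
          Polynomial.C ((-1 : ℤ) ^ t * (N.choose t : ℤ)) * X ^ (2 * t) := by
    rw [sub_eq_add_neg, add_comm, add_pow]
    refine Finset.sum_congr rfl fun t ht => ?_
    rw [one_pow, mul_one, neg_pow, ← pow_mul]
    rw [map_mul, map_pow, map_neg, map_one, map_natCast]
    ring
  rw [h, Polynomial.finset_sum_coeff]
  simp only [Polynomial.coeff_C_mul, Polynomial.coeff_X_pow]
  by_cases hd : 2 ∣ i
  · obtain ⟨t0, rfl⟩ := hd
    rw [Finset.sum_eq_single t0]
    · simp [Nat.mul_div_cancel_left _ (by norm_num : 0 < 2)]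
    · intro b _ hb
      rw [if_neg (by omega), mul_zero]
    · intro h
      simp only [Finset.mem_range, not_lt] at h
      simp [Nat.choose_eq_zero_of_lt (by omega : N < t0)]
  · rw [if_neg hd]
    refine Finset.sum_eq_zero fun t _ => ?_
    rw [if_neg (by rintro rfl; exact hd ⟨t, rfl⟩), mul_zero]

lemma coeff_kraw (k i : ℕ) (hk : 1 ≤ k) :
    ((1 - X : ℤ[X]) ^ k * (1 + X) ^ (k - 1)).coeff i
      = (-1 : ℤ) ^ ((i + 1) / 2) * ((k - 1).choose (i / 2) : ℤ) := by
  have hsplit : (1 - X : ℤ[X]) ^ k * (1 + X) ^ (k - 1)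
      = (1 - X) * (1 - X ^ 2) ^ (k - 1) := by
    conv_lhs => rw [show k = (k - 1) + 1 by omega]
    rw [pow_succ, Nat.add_sub_cancel]
    rw [mul_comm ((1 - X : ℤ[X]) ^ (k-1)) (1 - X), mul_assoc, ← mul_pow]
    rw [show ((1 - X) * (1 + X) : ℤ[X]) = 1 - X ^ 2 from by ring]
  rw [hsplit]
  have hp : ∀ j, ((1 - X : ℤ[X]) * (1 - X ^ 2) ^ (k - 1)).coeff j
      = ((1 - X^2 : ℤ[X]) ^ (k-1)).coeff j - if j = 0 then 0 else ((1 - X^2 : ℤ[X]) ^ (k-1)).coeff (j - 1) := by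
    intro j
    rw [sub_mul, one_mul, Polynomial.coeff_sub]
    congr 1
    cases j with
    | zero => simp [Polynomial.mul_coeff_zero]
    | succ n => rw [Polynomial.coeff_X_mul]; simp
  rw [hp, coeff_one_sub_sq, coeff_one_sub_sq]
  rcases Nat.even_or_odd i with ⟨t, rfl⟩ | ⟨t, rfl⟩
  · have h1 : 2 ∣ t + t := ⟨t, by omega⟩
    rw [if_pos h1]
    have ht2 : (t + t) / 2 = t := by omega
    have ht3 : (t + t + 1) / 2 = t := by omega
    rw [ht2, ht3]
    rcases Nat.eq_zero_or_pos t with rfl | ht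
    · simp
    · rw [if_neg (by omega), if_neg (by omega : ¬ 2 ∣ t + t - 1), sub_zero]
  · rw [if_neg (by omega : ¬ 2 ∣ 2*t + 1), if_neg (by omega), if_pos (by omega : 2 ∣ 2*t+1-1)]
    have : (2*t + 1 - 1) / 2 = t := by omega
    rw [this]
    have : (2*t + 1 + 1) / 2 = t + 1 := by omega
    rw [this]
    have h4 : (2 * t + 1) / 2 = t := by omega
    rw [h4]
    ring

def chi (x : ZMod 2) : ℤ := (-1) ^ x.val

lemma chi_zero : chi 0 = 1 := rfl
lemma chi_one : chi 1 = -1 := rfl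

lemma chi_add (a b : ZMod 2) : chi (a + b) = chi a * chi b := by revert a b; decide

lemma chi_sum {ι : Type*} (s : Finset ι) (f : ι → ZMod 2) :
    chi (∑ j ∈ s, f j) = ∏ j ∈ s, chi (f j) := by
  classical
  induction s using Finset.induction with
  | empty => simp [chi]
  | insert _ _ h ih => rw [Finset.sum_insert h, Finset.prod_insert h, chi_add, ih]

lemma hammingNorm_eq_sum {n : ℕ} (v : Fin n → ZMod 2) :
    hammingNorm v = ∑ j, (v j).val := by
  rw [hammingNorm, Finset.card_filter]
  refine Finset.sum_congr rfl fun j _ => ?_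
  have : ∀ a : ZMod 2, (if a ≠ 0 then 1 else 0) = a.val := by decide
  exact this (v j)

lemma gen {n : ℕ} (w : Fin n → ZMod 2) :
    ∏ j, (1 + Polynomial.C (chi (w j)) * X)
      = ∑ v : Fin n → ZMod 2, Polynomial.C (chi (∑ j, v j * w j)) * X ^ (hammingNorm v) := by
  have h1 : ∀ j : Fin n, (1 + Polynomial.C (chi (w j)) * X : ℤ[X])
      = ∑ t : ZMod 2, Polynomial.C (chi (t * w j)) * X ^ (t.val) := by
    intro j
    rw [show ∑ t : ZMod 2, Polynomial.C (chi (t * w j)) * X ^ (t.val)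
        = Polynomial.C (chi (0 * w j)) * X ^ ((0 : ZMod 2).val)
          + Polynomial.C (chi (1 * w j)) * X ^ ((1 : ZMod 2).val) from Fin.sum_univ_two _]
    norm_num [chi, ZMod.val_zero, ZMod.val_one]
  calc ∏ j, (1 + Polynomial.C (chi (w j)) * X)
      = ∏ j, ∑ t : ZMod 2, Polynomial.C (chi (t * w j)) * X ^ (t.val) := by
        exact Finset.prod_congr rfl fun j _ => h1 j
    _ = ∑ v ∈ Fintype.piFinset (fun _ : Fin n => (univ : Finset (ZMod 2))),
          ∏ j, Polynomial.C (chi (v j * w j)) * X ^ ((v j).val) := Finset.prod_univ_sum _ _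
    _ = ∑ v : Fin n → ZMod 2, Polynomial.C (chi (∑ j, v j * w j)) * X ^ (hammingNorm v) := by
        rw [Fintype.piFinset_univ]
        refine Finset.sum_congr rfl fun v _ => ?_
        rw [Finset.prod_mul_distrib, ← map_prod, ← chi_sum, Finset.prod_pow_eq_pow_sum,
          hammingNorm_eq_sum]

lemma coeff_sum_eq {n : ℕ} (w : Fin n → ZMod 2) (i : ℕ) :
    ∑ v ∈ univ.filter (fun v : Fin n → ZMod 2 => hammingNorm v = i), chi (∑ j, v j * w j)
      = (∏ j, (1 + Polynomial.C (chi (w j)) * X)).coeff i := by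
  rw [gen, Polynomial.finset_sum_coeff]
  simp only [Polynomial.coeff_C_mul, Polynomial.coeff_X_pow]
  rw [Finset.sum_filter]
  refine Finset.sum_congr rfl fun v _ => ?_
  by_cases h : hammingNorm v = i
  · rw [if_pos h, if_pos h.symm, mul_one]
  · rw [if_neg h, if_neg (fun hh => h hh.symm), mul_zero]

lemma prod_split {n : ℕ} (w : Fin n → ZMod 2) :
    ∏ j, (1 + Polynomial.C (chi (w j)) * X)
      = (1 - X) ^ (hammingNorm w) * (1 + X) ^ (n - hammingNorm w) := by
  classical
  rw [← Finset.prod_filter_mul_prod_filter_not univ (fun j => w j ≠ 0)]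
  have h1 : ∀ j ∈ univ.filter (fun j => w j ≠ 0), (1 + Polynomial.C (chi (w j)) * X : ℤ[X]) = 1 - X := by
    intro j hj
    simp only [Finset.mem_filter] at hj
    have hz : ∀ a : ZMod 2, a ≠ 0 → a = 1 := by decide
    rw [hz _ hj.2, chi_one, map_neg, map_one]; ring
  have h2 : ∀ j ∈ univ.filter (fun j => ¬ w j ≠ 0), (1 + Polynomial.C (chi (w j)) * X : ℤ[X]) = 1 + X := by
    intro j hj
    simp only [Finset.mem_filter, not_not] at hj
    rw [hj.2, chi_zero]; simp
  rw [Finset.prod_congr rfl h1, Finset.prod_congr rfl h2, Finset.prod_const, Finset.prod_const]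
  have hc : #(filter (fun j => ¬ w j ≠ 0) univ) = n - hammingNorm w := by
    have := Finset.card_filter_add_card_filter_not (s := (univ : Finset (Fin n))) (p := fun j => w j ≠ 0)
    rw [hammingNorm]
    simp only [Finset.card_univ, Fintype.card_fin] at this ⊢
    omega
  rw [hc]
  rfl

lemma chi_add_one (a : ZMod 2) : chi (a + 1) = - chi a := by revert a; decide
lemma zmod2_eq_one {a : ZMod 2} (h : a ≠ 0) : a = 1 := by revert a; decide
lemma zmod2_ne_zero_iff (a : ZMod 2) : ¬ a = 0 ↔ a = 1 := by revert a; decide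

section TraceSec
variable (F : Type*) [Field F] [Fintype F] [Algebra (ZMod 2) F]

lemma exists_tr_one : ∃ y : F, Algebra.trace (ZMod 2) F y = 1 := by
  have h := Algebra.trace_ne_zero (ZMod 2) F
  have : ∃ y : F, Algebra.trace (ZMod 2) F y ≠ 0 := by
    by_contra hc
    push_neg at hc
    exact h (LinearMap.ext fun y => hc y)
  obtain ⟨y, hy⟩ := this
  exact ⟨y, zmod2_eq_one hy⟩

lemma sum_chi_tr_ne (x : F) (hx : x ≠ 0) :
    ∑ β : F, chi (Algebra.trace (ZMod 2) F (β * x)) = 0 := by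
  obtain ⟨y, hy⟩ := exists_tr_one F
  set T := fun β : F => chi (Algebra.trace (ZMod 2) F (β * x)) with hT
  have key : ∑ β : F, T β = - ∑ β : F, T β := by
    calc ∑ β : F, T β = ∑ β : F, T (β + y * x⁻¹) :=
          (Fintype.sum_equiv (Equiv.addRight (y * x⁻¹)) _ _ (fun β => rfl)).symm
      _ = - ∑ β : F, T β := by
          rw [← Finset.sum_neg_distrib]
          refine Finset.sum_congr rfl fun β _ => ?_
          rw [hT]
          simp only []
          rw [add_mul, mul_assoc, inv_mul_cancel₀ hx, mul_one, map_add, hy, chi_add_one]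
  linarith

open scoped Classical in
lemma sum_chi_tr (m : ℕ) (x : F) (hq : Fintype.card F = 2 ^ m) :
    ∑ β : F, chi (Algebra.trace (ZMod 2) F (β * x)) = if x = 0 then ((2:ℤ) ^ m) else 0 := by
  by_cases hx : x = 0
  · subst hx
    rw [if_pos rfl]
    have : ∀ β : F, chi (Algebra.trace (ZMod 2) F (β * 0)) = 1 := by
      intro β; rw [mul_zero, map_zero, chi_zero]
    rw [Finset.sum_congr rfl fun β _ => this β, Finset.sum_const, Finset.card_univ, hq]
    push_cast; ring
  · rw [if_neg hx, sum_chi_tr_ne F x hx]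

open scoped Classical in
lemma card_tr_one (m : ℕ) (hq : Fintype.card F = 2 ^ m) (hm : 1 ≤ m) :
    #(univ.filter fun y : F => Algebra.trace (ZMod 2) F y = 1) = 2 ^ (m - 1) := by
  obtain ⟨y₀, hy₀⟩ := exists_tr_one F
  have h2F : (2 : F) = 0 := by
    rw [show (2 : F) = algebraMap (ZMod 2) F 2 from (map_ofNat _ 2).symm]
    rw [show (2 : ZMod 2) = 0 from by decide, map_zero]
  have hyy : y₀ + y₀ = 0 := by rw [← two_mul, h2F, zero_mul]
  have hbij : #(univ.filter fun y : F => Algebra.trace (ZMod 2) F y = 0)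
      = #(univ.filter fun y : F => Algebra.trace (ZMod 2) F y = 1) := by
    apply Finset.card_nbij (fun y => y + y₀)
    · intro a ha
      simp only [Finset.mem_coe, Finset.mem_filter, Finset.mem_univ, true_and] at *
      rw [map_add, ha, hy₀, zero_add]
    · intro a _ b _ hab
      simpa using hab
    · intro b hb
      simp only [Finset.coe_filter, Set.mem_setOf_eq, Finset.mem_univ, true_and,
        Set.mem_image] at *
      refine ⟨b + y₀, ?_, by rw [add_assoc, hyy, add_zero]⟩
      rw [map_add, hb, hy₀]
      decide
  have hco : (univ.filter fun a : F => ¬ Algebra.trace (ZMod 2) F a = 0)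
      = (univ.filter fun y : F => Algebra.trace (ZMod 2) F y = 1) :=
    Finset.filter_congr fun y _ => by simp [zmod2_ne_zero_iff]
  have hsplit := Finset.card_filter_add_card_filter_not
    (s := (univ : Finset F)) (p := fun y : F => Algebra.trace (ZMod 2) F y = 0)
  rw [hco, Finset.card_univ, hq] at hsplit
  have hpow : 2 ^ m = 2 ^ (m - 1) + 2 ^ (m - 1) := by
    rw [← two_mul, ← pow_succ']
    congr 1
    omega
  omega
end TraceSec

lemma zmod2_ne_zero_iff' (a : ZMod 2) : ¬ a = 0 ↔ a = 1 := by revert a; decide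

open scoped Classical in
lemma weight_w (m : ℕ) (F : Type*) [Field F] [Fintype F] [Algebra (ZMod 2) F]
    (hq : Fintype.card F = 2 ^ m) (hm : 2 ≤ m) (α : F) (hα : orderOf α = 2 ^ m - 1)
    (htr1 : #(univ.filter fun y : F => Algebra.trace (ZMod 2) F y = 1) = 2 ^ (m - 1))
    (β : F) (hβ : β ≠ 0) :
    hammingNorm (fun j : Fin (2 ^ m - 1) => Algebra.trace (ZMod 2) F (β * α ^ (j : ℕ)))
      = 2 ^ (m - 1) := by
  have hn3 : 3 ≤ 2 ^ m - 1 := by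
    have : 4 ≤ 2 ^ m := by calc 4 = 2 ^ 2 := rfl
                                _ ≤ 2 ^ m := Nat.pow_le_pow_right (by norm_num) hm
    omega
  have hα0 : α ≠ 0 := by
    intro h
    rw [h] at hα
    have : orderOf (0 : F) = 0 := by
      rw [orderOf_eq_zero_iff']
      intro k hk
      rw [zero_pow (by omega)]
      exact fun h => one_ne_zero h.symm
    omega
  set g : Fin (2 ^ m - 1) → F := fun j => β * α ^ (j : ℕ) with hg
  have hginj : Function.Injective g := by
    intro a b hab
    rw [hg] at hab
    simp only [] at hab
    have := mul_left_cancel₀ hβ hab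
    exact Fin.ext (pow_injOn_Iio_orderOf (by rw [hα]; exact a.2) (by rw [hα]; exact b.2) this)
  have himg : Finset.image g univ = univ.filter (fun x : F => x ≠ 0) := by
    apply Finset.eq_of_subset_of_card_le
    · intro x hx
      simp only [Finset.mem_image, Finset.mem_filter, Finset.mem_univ, true_and] at *
      obtain ⟨j, _, rfl⟩ := hx
      exact mul_ne_zero hβ (pow_ne_zero _ hα0)
    · rw [Finset.card_image_of_injective _ hginj, Finset.card_univ, Fintype.card_fin]
      have he : (univ.filter fun x : F => x ≠ 0) = univ.erase 0 := Finset.filter_ne' _ _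
      rw [he, Finset.card_erase_of_mem (Finset.mem_univ 0), Finset.card_univ, hq]
  rw [hammingNorm]
  have step1 : (univ.filter fun j : Fin (2 ^ m - 1) => Algebra.trace (ZMod 2) F (g j) ≠ 0)
      = univ.filter fun j => (fun x : F => Algebra.trace (ZMod 2) F x ≠ 0) (g j) := rfl
  have step2 : #(univ.filter fun j : Fin (2 ^ m - 1) => Algebra.trace (ZMod 2) F (g j) ≠ 0)
      = #((Finset.image g univ).filter fun x : F => Algebra.trace (ZMod 2) F x ≠ 0) := by
    rw [Finset.filter_image]
    rw [Finset.card_image_of_injective _ hginj]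
  show #(univ.filter fun j : Fin (2 ^ m - 1) => Algebra.trace (ZMod 2) F (g j) ≠ 0) = _
  rw [step2, himg, Finset.filter_filter]
  rw [← htr1]
  congr 1
  apply Finset.filter_congr
  intro y _
  constructor
  · rintro ⟨_, h⟩
    exact (zmod2_ne_zero_iff' _).mp h
  · intro h
    refine ⟨?_, (zmod2_ne_zero_iff' _).mpr h⟩
    intro h0
    rw [h0, map_zero] at h
    exact one_ne_zero h.symm

lemma mem_iff_aux (m : ℕ) (F : Type*) [Field F] [Fintype F] [Algebra (ZMod 2) F]
    (α : F) (hα : orderOf α = 2 ^ m - 1) (hm : 2 ≤ m) (v : Fin (2 ^ m - 1) → ZMod 2) :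
    (Ideal.Quotient.mk
      (Ideal.span {(X : Polynomial (ZMod 2)) ^ (2 ^ m - 1) - 1}) (toPoly v) ∈
    Ideal.span {Ideal.Quotient.mk
      (Ideal.span {(X : Polynomial (ZMod 2)) ^ (2 ^ m - 1) - 1}) (minpoly (ZMod 2) α)})
    ↔ ∑ j : Fin (2 ^ m - 1), algebraMap (ZMod 2) F (v j) * α ^ (j : ℕ) = 0 := by
  let n := 2 ^ m - 1
  let p := minpoly (ZMod 2) α
  let I := Ideal.span {(X : Polynomial (ZMod 2)) ^ n - 1}
  show Ideal.Quotient.mk I (toPoly v) ∈ Ideal.span {Ideal.Quotient.mk I p} ↔ _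
  have hint : IsIntegral (ZMod 2) α := IsIntegral.of_finite (ZMod 2) α
  have hdvd : p ∣ (X : Polynomial (ZMod 2)) ^ n - 1 := by
    apply minpoly.dvd
    simp [pow_orderOf_eq_one α ▸ (hα ▸ rfl : α ^ n = α ^ orderOf α)]
  have hIle : ((X : Polynomial (ZMod 2)) ^ n - 1) ∈ Ideal.span {p} :=
    Ideal.mem_span_singleton.mpr hdvd
  have key : (Ideal.Quotient.mk I (toPoly v) ∈
      Ideal.span {Ideal.Quotient.mk I p}) ↔ toPoly v ∈ Ideal.span {p} := by
    have hmap : Ideal.span {Ideal.Quotient.mk I p} = Ideal.map (Ideal.Quotient.mk I) (Ideal.span {p}) := by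
      rw [Ideal.map_span, Set.image_singleton]
    rw [hmap, Ideal.mem_map_iff_of_surjective _ Ideal.Quotient.mk_surjective]
    constructor
    · rintro ⟨y, hy, hxy⟩
      have hsub : toPoly v - y ∈ I := (Ideal.Quotient.eq).mp hxy.symm
      have : toPoly v - y ∈ Ideal.span {p} := by
        have : I ≤ Ideal.span {p} := by
          rw [Ideal.span_le, Set.singleton_subset_iff]
          exact hIle
        exact this hsub
      have := Ideal.add_mem _ this hy
      rwa [sub_add_cancel] at this
    · intro hx
      exact ⟨toPoly v, hx, rfl⟩
  rw [key, Ideal.mem_span_singleton]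
  rw [minpoly.dvd_iff]
  constructor
  · intro h
    rw [← h]
    simp [toPoly, Polynomial.aeval_def, Polynomial.eval₂_finset_sum]
  · intro h
    rw [← h]
    simp [toPoly, Polynomial.aeval_def, Polynomial.eval₂_finset_sum]


open scoped Classical in
lemma main_id (m : ℕ) (hm : 2 ≤ m) (F : Type*) [Field F] [Fintype F]
    [Algebra (ZMod 2) F] (hq : Fintype.card F = 2 ^ m)
    (α : F) (hα : orderOf α = 2 ^ m - 1)
    (A : ℕ → ℕ)
    (hA : ∀ i, A i = Nat.card {v : Fin (2 ^ m - 1) → ZMod 2 //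
      v ∈ hammingCode m F α ∧ hammingNorm v = i}) :
    ∀ i : ℕ, (2 ^ m : ℤ) * A i
        = (Nat.choose (2 ^ m - 1) i : ℤ)
          + (2 ^ m - 1) * (-1) ^ ((i + 1) / 2) * (Nat.choose (2 ^ m / 2 - 1) (i / 2)) := by
  intro i
  have h2m : 2 ^ m = 2 * 2 ^ (m - 1) := by
    conv_lhs => rw [show m = (m - 1) + 1 by omega]
    rw [pow_succ]; ring
  have h4 : 4 ≤ 2 ^ m := by
    calc (4 : ℕ) = 2 ^ 2 := rfl
      _ ≤ 2 ^ m := Nat.pow_le_pow_right (by norm_num) hm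
  have hk1 : 1 ≤ 2 ^ (m - 1) := Nat.one_le_two_pow
  have hm1 : 1 ≤ m := by omega
  have hnk : 2 ^ m - 1 - 2 ^ (m - 1) = 2 ^ (m - 1) - 1 := by omega
  have hq2 : (2 : ℕ) ^ m / 2 - 1 = 2 ^ (m - 1) - 1 := by omega
  have hq1 : 1 ≤ 2 ^ m := by omega
  have hAi : A i = #(univ.filter fun v : Fin (2 ^ m - 1) → ZMod 2 =>
      hammingNorm v = i ∧ (∑ j, algebraMap (ZMod 2) F (v j) * α ^ (j : ℕ)) = 0) := by
    rw [hA i, Nat.card_eq_fintype_card, Fintype.card_subtype]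
    congr 1
    apply Finset.filter_congr
    intro v _
    have hmem : v ∈ hammingCode m F α ↔ (∑ j, algebraMap (ZMod 2) F (v j) * α ^ (j : ℕ)) = 0 :=
      mem_iff_aux m F α hα hm v
    constructor
    · rintro ⟨ha, hb⟩; exact ⟨hb, hmem.mp ha⟩
    · rintro ⟨ha, hb⟩; exact ⟨hmem.mpr hb, ha⟩
  have hw : ∀ β : F,
      (∑ v ∈ univ.filter (fun v : Fin (2 ^ m - 1) → ZMod 2 => hammingNorm v = i),
        chi (Algebra.trace (ZMod 2) F (β * ∑ j, algebraMap (ZMod 2) F (v j) * α ^ (j : ℕ))))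
      = ((1 - X : ℤ[X]) ^ (hammingNorm (fun j : Fin (2 ^ m - 1) =>
            Algebra.trace (ZMod 2) F (β * α ^ (j : ℕ))))
          * (1 + X) ^ ((2 ^ m - 1) - hammingNorm (fun j : Fin (2 ^ m - 1) =>
            Algebra.trace (ZMod 2) F (β * α ^ (j : ℕ))))).coeff i := by
    intro β
    rw [← prod_split, ← coeff_sum_eq]
    refine Finset.sum_congr rfl fun v _ => ?_
    congr 1
    rw [show β * (∑ j, algebraMap (ZMod 2) F (v j) * α ^ (j : ℕ))
        = ∑ j : Fin (2 ^ m - 1), (v j) • (β * α ^ (j : ℕ)) from by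
      rw [Finset.mul_sum]
      refine Finset.sum_congr rfl fun j _ => ?_
      rw [Algebra.smul_def]; ring]
    rw [map_sum]
    refine Finset.sum_congr rfl fun j _ => ?_
    rw [map_smul, smul_eq_mul]
  have hmain1 : ((2 : ℤ) ^ m) * A i
      = ∑ β : F, ∑ v ∈ univ.filter (fun v : Fin (2 ^ m - 1) → ZMod 2 => hammingNorm v = i),
          chi (Algebra.trace (ZMod 2) F (β * ∑ j, algebraMap (ZMod 2) F (v j) * α ^ (j : ℕ))) := by
    rw [Finset.sum_comm]
    have hstep : ∀ v ∈ univ.filter (fun v : Fin (2 ^ m - 1) → ZMod 2 => hammingNorm v = i),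
        (∑ β : F, chi (Algebra.trace (ZMod 2) F
            (β * ∑ j, algebraMap (ZMod 2) F (v j) * α ^ (j : ℕ))))
        = if (∑ j, algebraMap (ZMod 2) F (v j) * α ^ (j : ℕ)) = 0 then ((2 : ℤ) ^ m) else 0 :=
      fun v _ => sum_chi_tr F m _ hq
    rw [Finset.sum_congr rfl hstep, ← Finset.sum_filter, Finset.filter_filter,
      Finset.sum_const, hAi, nsmul_eq_mul, mul_comm]
  rw [hmain1, ← Finset.add_sum_erase _ _ (Finset.mem_univ (0 : F))]
  have hzero : hammingNorm (fun j : Fin (2 ^ m - 1) =>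
      Algebra.trace (ZMod 2) F ((0 : F) * α ^ (j : ℕ))) = 0 := by
    have hz : (fun j : Fin (2 ^ m - 1) => Algebra.trace (ZMod 2) F ((0 : F) * α ^ (j : ℕ)))
        = (0 : Fin (2 ^ m - 1) → ZMod 2) := by
      funext j; rw [zero_mul, map_zero]; rfl
    rw [hz, hammingNorm_zero]
  have hterm0 : (∑ v ∈ univ.filter (fun v : Fin (2 ^ m - 1) → ZMod 2 => hammingNorm v = i),
        chi (Algebra.trace (ZMod 2) F ((0:F) * ∑ j, algebraMap (ZMod 2) F (v j) * α ^ (j : ℕ))))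
      = (Nat.choose (2 ^ m - 1) i : ℤ) := by
    rw [hw 0, hzero, pow_zero, one_mul, Nat.sub_zero, Polynomial.coeff_one_add_X_pow]
  have htermβ : ∀ β ∈ (univ : Finset F).erase 0,
      (∑ v ∈ univ.filter (fun v : Fin (2 ^ m - 1) → ZMod 2 => hammingNorm v = i),
        chi (Algebra.trace (ZMod 2) F (β * ∑ j, algebraMap (ZMod 2) F (v j) * α ^ (j : ℕ))))
      = (-1 : ℤ) ^ ((i + 1) / 2) * ((2 ^ (m - 1) - 1).choose (i / 2) : ℤ) := by
    intro β hβ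
    rw [hw β, weight_w m F hq hm α hα (card_tr_one F m hq hm1) β
      (Finset.ne_of_mem_erase hβ)]
    rw [hnk, coeff_kraw _ _ hk1]
  rw [hterm0, Finset.sum_congr rfl htermβ, Finset.sum_const,
    Finset.card_erase_of_mem (Finset.mem_univ _), Finset.card_univ, hq, nsmul_eq_mul]
  rw [hq2]
  rw [Nat.cast_sub hq1]
  push_cast
  ring
lemma two_choose (nn : ℕ) : 2 * nn.choose 2 = (nn - 1) * nn := by
  have h := Nat.descFactorial_eq_factorial_mul_choose nn 2
  simp [Nat.descFactorial, Nat.factorial] at h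
  omega
lemma six_choose (nn : ℕ) : 6 * nn.choose 3 = (nn - 2) * ((nn - 1) * nn) := by
  have h := Nat.descFactorial_eq_factorial_mul_choose nn 3
  simp [Nat.descFactorial, Nat.factorial, mul_assoc] at h
  omega

/-- the weight distribution of the Hamming code `H_m`: with `q = 2^m` and
`A_i` the number of codewords of weight `i`,
`q·A_i = C(q−1,i) + (q−1)·(−1)^⌊(i+1)/2⌋·C(q/2−1,⌊i/2⌋)`; in particular `A_1 = A_2 = 0`
and `A_3 = (q−1)(q−2)/6`. -/
theorem stmt_15 (m : ℕ) (hm : 2 ≤ m) (F : Type*) [Field F] [Fintype F]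
    [Algebra (ZMod 2) F] (hq : Fintype.card F = 2 ^ m)
    (α : F) (hα : orderOf α = 2 ^ m - 1)
    (A : ℕ → ℕ)
    (hA : ∀ i, A i = Nat.card {v : Fin (2 ^ m - 1) → ZMod 2 //
      v ∈ hammingCode m F α ∧ hammingNorm v = i}) :
    (∀ i : ℕ, (2 ^ m : ℤ) * A i
        = (Nat.choose (2 ^ m - 1) i : ℤ)
          + (2 ^ m - 1) * (-1) ^ ((i + 1) / 2) * (Nat.choose (2 ^ m / 2 - 1) (i / 2))) ∧
    A 1 = 0 ∧ A 2 = 0 ∧ 6 * A 3 = (2 ^ m - 1) * (2 ^ m - 2) := by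
  have main := main_id m hm F hq α hα A hA
  have h2m : 2 ^ m = 2 * 2 ^ (m - 1) := by
    conv_lhs => rw [show m = (m - 1) + 1 by omega]
    rw [pow_succ]; ring
  have h4 : 4 ≤ 2 ^ m := by
    calc (4 : ℕ) = 2 ^ 2 := rfl
      _ ≤ 2 ^ m := Nat.pow_le_pow_right (by norm_num) hm
  have hq0 : ((2 : ℤ) ^ m) ≠ 0 := by positivity
  have hcast : ((2 ^ m - 1 : ℕ) : ℤ) = 2 ^ m - 1 := by
    rw [Nat.cast_sub (by omega : 1 ≤ 2 ^ m)]; push_cast; ring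
  have hcast2 : ((2 ^ m / 2 - 1 : ℕ) : ℤ) = 2 ^ (m - 1) - 1 := by
    rw [show (2:ℕ) ^ m / 2 - 1 = 2 ^ (m-1) - 1 by omega,
      Nat.cast_sub (by omega : 1 ≤ 2 ^ (m-1))]; push_cast; ring
  have hkc : ((2:ℤ) ^ (m - 1)) * 2 = 2 ^ m := by
    rw [show ((2:ℤ)^m) = ((2^m : ℕ) : ℤ) by push_cast; ring, h2m]; push_cast; ring
  have hsub1 : 1 ≤ 2 ^ m := by omega
  have hsub2 : 2 ≤ 2 ^ m := by omega
  have hsub3 : 3 ≤ 2 ^ m := by omega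
  have hx : ((2:ℤ) ^ (m - 1) - 1) * 2 = 2 ^ m - 2 := by rw [sub_mul, hkc]; ring
  refine ⟨main, ?_, ?_, ?_⟩
  · have h := main 1
    rw [Nat.choose_one_right, Nat.choose_zero_right] at h
    norm_num [hcast] at h
    exact h
  · have h := main 2
    rw [Nat.choose_one_right] at h
    norm_num [hcast, hcast2] at h
    have hch : ((Nat.choose (2 ^ m - 1) 2 : ℕ) : ℤ) * 2 = (2 ^ m - 2) * (2 ^ m - 1) := by
      have h2c : ((2 * Nat.choose (2 ^ m - 1) 2 : ℕ) : ℤ)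
          = (((2 ^ m - 1 - 1) * (2 ^ m - 1) : ℕ) : ℤ) := by exact_mod_cast two_choose (2 ^ m - 1)
      push_cast [Nat.cast_sub hsub1, Nat.cast_sub (by omega : 1 ≤ 2 ^ m - 1)] at h2c
      push_cast
      linarith
    have h2 : ((2:ℤ) ^ m) * ((A 2 : ℤ) * 2) = 0 := by
      linear_combination (2:ℤ) * h + hch + (1 - (2:ℤ)^m) * hx
    have hA2 : ((A 2 : ℤ)) = 0 := by
      rcases mul_eq_zero.mp h2 with h' | h'
      · exact absurd h' hq0
      · rcases mul_eq_zero.mp h' with h'' | h''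
        · exact h''
        · norm_num at h''
    exact_mod_cast hA2
  · have h := main 3
    rw [Nat.choose_one_right] at h
    norm_num [hcast, hcast2] at h
    have hch3 : ((Nat.choose (2 ^ m - 1) 3 : ℕ) : ℤ) * 6
        = (2 ^ m - 3) * ((2 ^ m - 2) * (2 ^ m - 1)) := by
      have h3c : ((6 * Nat.choose (2 ^ m - 1) 3 : ℕ) : ℤ)
          = (((2 ^ m - 1 - 2) * ((2 ^ m - 1 - 1) * (2 ^ m - 1)) : ℕ) : ℤ) := by
        exact_mod_cast six_choose (2 ^ m - 1)
      push_cast [Nat.cast_sub hsub1, Nat.cast_sub (by omega : 1 ≤ 2 ^ m - 1),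
        Nat.cast_sub (by omega : 2 ≤ 2 ^ m - 1)] at h3c
      push_cast
      linarith
    have key : ((2:ℤ) ^ m) * ((6 : ℤ) * (A 3 : ℤ))
        = ((2:ℤ) ^ m) * (((2:ℤ) ^ m - 1) * ((2:ℤ) ^ m - 2)) := by
      linear_combination (6:ℤ) * h + hch3 + 3 * ((2:ℤ)^m - 1) * hx
    have hz := mul_left_cancel₀ hq0 key
    have : ((6 * A 3 : ℕ) : ℤ) = (((2 ^ m - 1) * (2 ^ m - 2) : ℕ) : ℤ) := by
      push_cast [Nat.cast_sub hsub1, Nat.cast_sub hsub2]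
      linarith
    exact_mod_cast this
end

section
/- Let F_q be a finite field of characteristic 2 with q > 4, and λ, μ ∈ F_q with μ ≠ 0. The Hamming weight of the word v_{λ,μ} = (Tr_{F_q/F_2}(λx + μx^3))_{x ∈ F_q^*} equals (q−1) − (1/2)(N − 3), where N is the number of F_q-rational points (including the point at infinity) of the projective curve with affine equation Y^2 + Y = λX + μX^3. -/
/-!
Over a finite field `F` of characteristic 2, the additive map `y ↦ y² + y` has kernel `{0, 1}`,
so its image has index 2; the image lies in the kernel of `Tr : F → 𝔽₂` (as `Tr (y²) = Tr y`),
which also has index 2, so the two coincide. Hence `y² + y = c` has two solutions when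
`Tr c = 0` and none otherwise, and the curve `y² + y = f(x)` has `2 · #{x | Tr (f x) = 0}` affine
points. With `f x = λx + μx³` the coordinate at `x = 0` vanishes, so `N - 1 = 2 (q - w)` for the
weight `w` of the word.
-/

open Finset

theorem Algebra.trace_pow_card_eq_trace {K L : Type*} [Field K] [Fintype K] [Field L]
    [Algebra K L] [Algebra.IsAlgebraic K L] (y : L) :
    Algebra.trace K L (y ^ Fintype.card K) = Algebra.trace K L y :=
  Algebra.trace_eq_of_algEquiv (FiniteField.frobeniusAlgEquivOfAlgebraic K L) y

section CharTwo

variable {R : Type*} [CommRing R] [CharP R 2]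

variable (R) in
def artinSchreier : R →+ R where
  toFun y := y ^ 2 + y
  map_zero' := by simp
  map_add' x y := by rw [CharTwo.add_sq]; ring

@[simp]
theorem artinSchreier_apply (y : R) : artinSchreier R y = y ^ 2 + y := rfl

theorem sq_add_self_eq_zero_iff [NoZeroDivisors R] {y : R} : y ^ 2 + y = 0 ↔ y = 0 ∨ y = 1 := by
  rw [show y ^ 2 + y = y * (y + 1) by ring, mul_eq_zero, CharTwo.add_eq_zero]

end CharTwo

section FiniteField

variable {F : Type*} [Field F] [Fintype F]

theorem trace_sq_add_self_eq_zero [Algebra (ZMod 2) F] (y : F) :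
    Algebra.trace (ZMod 2) F (y ^ 2 + y) = 0 := by
  have h := Algebra.trace_pow_card_eq_trace (K := ZMod 2) y
  rw [ZMod.card] at h
  rw [map_add, h, CharTwo.add_self_eq_zero]

theorem two_mul_card_range_artinSchreier [CharP F 2] :
    2 * Nat.card (artinSchreier F).range = Fintype.card F := by
  have hker : Nat.card (artinSchreier F).ker = 2 := by
    rw [← SetLike.coe_sort_coe, Nat.card_coe_set_eq, Set.ncard_eq_two]
    exact ⟨0, 1, zero_ne_one, by ext; simp [sq_add_self_eq_zero_iff]⟩
  rw [← hker, ← AddSubgroup.index_ker, AddSubgroup.card_mul_index, Nat.card_eq_fintype_card]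

theorem two_mul_card_ker_trace [Algebra (ZMod 2) F] :
    2 * Nat.card (Algebra.trace (ZMod 2) F).toAddMonoidHom.ker = Fintype.card F := by
  have hrange : Nat.card (Algebra.trace (ZMod 2) F).toAddMonoidHom.range = 2 := by
    rw [AddMonoidHom.range_eq_top.mpr (Algebra.trace_surjective (ZMod 2) F),
      AddSubgroup.card_top, Nat.card_zmod]
  have h := (Algebra.trace (ZMod 2) F).toAddMonoidHom.ker.card_mul_index
  rw [AddSubgroup.index_ker, hrange, Nat.card_eq_fintype_card (α := F)] at h
  omega

theorem range_artinSchreier_eq_ker_trace [CharP F 2] [Algebra (ZMod 2) F] :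
    (artinSchreier F).range = (Algebra.trace (ZMod 2) F).toAddMonoidHom.ker := by
  refine AddSubgroup.eq_of_le_of_card_ge ?_ ?_
  · rintro _ ⟨y, rfl⟩
    exact trace_sq_add_self_eq_zero y
  · have := two_mul_card_range_artinSchreier (F := F)
    have := two_mul_card_ker_trace (F := F)
    omega

theorem card_filter_sq_add_self_eq [CharP F 2] [Algebra (ZMod 2) F] [DecidableEq F] (c : F) :
    #{y | y ^ 2 + y = c} = if Algebra.trace (ZMod 2) F c = 0 then 2 else 0 := by
  split_ifs with hc
  · have hc' : c ∈ Set.range (artinSchreier F) := by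
      rw [← AddMonoidHom.coe_range, range_artinSchreier_eq_ker_trace]; exact hc
    have h := AddMonoidHom.card_fiber_eq_of_mem_range (artinSchreier F) hc' ⟨0, map_zero _⟩
    simp only [artinSchreier_apply, sq_add_self_eq_zero_iff] at h
    calc #{y | y ^ 2 + y = c} = #{y : F | y = 0 ∨ y = 1} := h
      _ = #({0, 1} : Finset F) := by congr 1; ext; simp
      _ = 2 := card_pair zero_ne_one
  · rw [Finset.card_eq_zero, Finset.filter_eq_empty_iff]
    rintro y - rfl
    exact hc (trace_sq_add_self_eq_zero y)

theorem card_solutions_sq_add_self_eq [CharP F 2] [Algebra (ZMod 2) F] [DecidableEq F]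
    (f : F → F) :
    Nat.card {p : F × F // p.2 ^ 2 + p.2 = f p.1} =
      2 * #{x | Algebra.trace (ZMod 2) F (f x) = 0} := by
  rw [Nat.card_congr (Equiv.subtypeProdEquivSigmaSubtype fun x y : F => y ^ 2 + y = f x),
    Nat.card_sigma]
  simp only [Nat.card_eq_fintype_card, Fintype.card_subtype, card_filter_sq_add_self_eq]
  rw [Finset.sum_ite, Finset.sum_const_zero, add_zero, Finset.sum_const, smul_eq_mul, mul_comm]

end FiniteField

theorem hammingNorm_subtype_ne_zero {α β : Type*} [Fintype α] [DecidableEq α] [Zero α] [Zero β]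
    [DecidableEq β] {g : α → β} (hg : g 0 = 0) :
    hammingNorm (fun x : {x : α // x ≠ 0} => g x) = #{x | g x ≠ 0} := by
  rw [hammingNorm, ← Fintype.card_subtype, ← Fintype.card_subtype]
  exact Fintype.card_congr <| Equiv.subtypeSubtypeEquivSubtype (p := (· ≠ 0))
    (q := (g · ≠ 0)) fun hgx hx => hgx (hx ▸ hg)

theorem stmt_17_general (F : Type*) [Field F] [Fintype F] [DecidableEq F] [CharP F 2]
    [Algebra (ZMod 2) F]
    (lam mu : F)
    (N : ℕ)
    (hN : N = Nat.card {p : F × F // p.2 ^ 2 + p.2 = lam * p.1 + mu * p.1 ^ 3} + 1) :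
    2 * (hammingNorm (fun x : {x : F // x ≠ 0} =>
        Algebra.trace (ZMod 2) F (lam * (x : F) + mu * (x : F) ^ 3)) : ℤ)
      = 2 * ((Fintype.card F : ℤ) - 1) - ((N : ℤ) - 3) := by
  rw [hammingNorm_subtype_ne_zero (g := fun x => Algebra.trace (ZMod 2) F (lam * x + mu * x ^ 3))
    (by simp), hN, card_solutions_sq_add_self_eq fun x => lam * x + mu * x ^ 3]
  have hsplit : #{x | Algebra.trace (ZMod 2) F (lam * x + mu * x ^ 3) = 0} +
      #{x | Algebra.trace (ZMod 2) F (lam * x + mu * x ^ 3) ≠ 0} = Fintype.card F :=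
    Finset.card_filter_add_card_filter_not _
  push_cast
  omega

/-- for `F_q` of characteristic 2 with `q > 4` and `λ, μ ∈ F_q`, `μ ≠ 0`, the
Hamming weight of the word `v_{λ,μ} = (Tr(λx + μx³))_{x ∈ F_q^*}` equals
`(q−1) − (1/2)(N − 3)`, where `N` is the number of `F_q`-points of the curve
`Y² + Y = λX + μX³` together with its single point at infinity. -/
theorem stmt_17 (F : Type*) [Field F] [Fintype F] [DecidableEq F] [CharP F 2]
    [Algebra (ZMod 2) F] (hq : 4 < Fintype.card F)
    (lam mu : F) (hmu : mu ≠ 0)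
    (N : ℕ)
    (hN : N = Nat.card {p : F × F // p.2 ^ 2 + p.2 = lam * p.1 + mu * p.1 ^ 3} + 1) :
    2 * (hammingNorm (fun x : {x : F // x ≠ 0} =>
        Algebra.trace (ZMod 2) F (lam * (x : F) + mu * (x : F) ^ 3)) : ℤ)
      = 2 * ((Fintype.card F : ℤ) - 1) - ((N : ℤ) - 3) :=
  stmt_17_general F lam mu N hN
end
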